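/- arXiv:2201.11901 — 2 statements merged into one kernel-verified Lean document; each statement's English description precedes it below -/
import Mathlib

section
/- Let n ≥ 1, let ξ ∈ ℂˣ satisfy ξ^(2n) = -1, and define ε₁ : ℤ/2n → {1,-1} by ε₁(2n-1) = -1 and ε₁(g) = 1 for g ≠ 2n-1. Then the unique function a : ℤ/2n → ℂˣ with a(0) = 1 satisfying a(g) · a(g-1) · ξ = ε₁(g-2) · ξ^(2g) for all g ∈ ℤ/2n (where the exponent 2g uses the representative of g in {0,...,2n-1}) is given by a(g) = -ξ^g for 1 ≤ g ≤ 2n-1 and a(0) = 1. -/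
/-- the unique solution of the recursion Eq. (n8) for `G = ℤ/2n`,
`p = 1`, with the stated normalization of `ε₁`, is `a g = -ξ^g` for `g ≠ 0`. -/
theorem stmt_4 (n : ℕ) (hn : 1 ≤ n) (ξ : ℂˣ) (hξ : ξ ^ (2 * n) = -1)
    (ε₁ : ZMod (2 * n) → ℂˣ)
    (hε₁ : ∀ g, ε₁ g = if g = ((2 * n - 1 : ℕ) : ZMod (2 * n)) then -1 else 1) :
    ∀ a : ZMod (2 * n) → ℂˣ,
      (a 0 = 1 ∧ ∀ g, a g * a (g - 1) * ξ = ε₁ (g - 2) * ξ ^ (2 * g.val)) ↔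
        (∀ g, a g = if g = 0 then 1 else -ξ ^ g.val) := by
  intro a
  haveI : NeZero (2 * n) := ⟨by omega⟩
  have hξ0 : (ξ : ℂ) ≠ 0 := ξ.ne_zero
  have hξC : (ξ : ℂ) ^ (2 * n) = -1 := by
    have := congrArg Units.val hξ; simpa using this
  have castval : ∀ k : ℕ, k < 2 * n → ((k : ZMod (2 * n))).val = k :=
    fun k hk => ZMod.val_cast_of_lt hk
  have castne : ∀ j k : ℕ, j < 2 * n → k < 2 * n → j ≠ k →
      (j : ZMod (2 * n)) ≠ (k : ZMod (2 * n)) := by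
    intro j k hj hk hjk h
    exact hjk (by rw [← castval j hj, ← castval k hk, h])
  have hεone : ∀ j : ℕ, j < 2 * n → j ≠ 2 * n - 1 → ε₁ (j : ZMod (2 * n)) = 1 := by
    intro j hj hj'
    rw [hε₁, if_neg (castne j (2 * n - 1) hj (by omega) hj')]
  have hεneg : ε₁ ((2 * n - 1 : ℕ) : ZMod (2 * n)) = -1 := by rw [hε₁, if_pos rfl]
  have subone : ∀ k : ℕ, 1 ≤ k → ((k : ZMod (2 * n)) - 1) = ((k - 1 : ℕ) : ZMod (2 * n)) := by
    intro k hk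
    rw [show (k : ZMod (2 * n)) = ((k - 1 + 1 : ℕ) : ZMod (2 * n)) by rw [Nat.sub_add_cancel hk]]
    push_cast; ring
  have subtwo : ∀ k : ℕ, 2 ≤ k → ((k : ZMod (2 * n)) - 2) = ((k - 2 : ℕ) : ZMod (2 * n)) := by
    intro k hk
    rw [show (k : ZMod (2 * n)) = ((k - 2 + 2 : ℕ) : ZMod (2 * n)) by rw [Nat.sub_add_cancel hk]]
    push_cast; ring
  have hneg1 : ((2 * n - 1 : ℕ) : ZMod (2 * n)) = -1 := by
    have h : ((2 * n - 1 + 1 : ℕ) : ZMod (2 * n)) = 0 := by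
      rw [Nat.sub_add_cancel (by omega)]; exact ZMod.natCast_self _
    push_cast at h
    linear_combination h
  have hneg2 : ((2 * n - 2 : ℕ) : ZMod (2 * n)) = -2 := by
    have h : ((2 * n - 2 + 2 : ℕ) : ZMod (2 * n)) = 0 := by
      rw [Nat.sub_add_cancel (by omega)]; exact ZMod.natCast_self _
    push_cast at h
    linear_combination h
  have hgcast : ∀ g : ZMod (2 * n), ((g.val : ℕ) : ZMod (2 * n)) = g := by
    intro g; simp [ZMod.natCast_val, ZMod.cast_id]
  have cancel : ∀ A X B : ℂ, B ≠ 0 → A * B = X * B → A = X :=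
    fun _ _ _ h e => mul_right_cancel₀ h e
  constructor
  · rintro ⟨h0, hrec⟩
    have key : ∀ k : ℕ, k < 2 * n → 1 ≤ k → a (k : ZMod (2 * n)) = -ξ ^ k := by
      intro k
      induction k with
      | zero => intro _ h; omega
      | succ k ih =>
        intro hk _
        have hrk := hrec ((k + 1 : ℕ) : ZMod (2 * n))
        rw [castval _ hk, subone (k + 1) (by omega), Nat.add_sub_cancel] at hrk
        rcases Nat.eq_zero_or_pos k with rfl | hk1
        · -- k + 1 = 1
          rw [show ((0 + 1 : ℕ) : ZMod (2 * n)) - 2 = ((2 * n - 1 : ℕ) : ZMod (2 * n)) by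
            rw [hneg1]; push_cast; ring, hεneg, Nat.cast_zero, h0] at hrk
          have hc := congrArg Units.val hrk
          simp only [Units.val_mul, Units.val_one, Units.val_neg, Units.val_pow_eq_pow_val] at hc
          refine Units.ext ?_
          simp only [Units.val_neg, Units.val_pow_eq_pow_val]
          refine cancel _ _ ((ξ : ℂ)) hξ0 ?_
          linear_combination hc
        · -- k + 1 ≥ 2
          obtain ⟨j, rfl⟩ : ∃ j, k = j + 1 := ⟨k - 1, by omega⟩
          rw [subtwo (j + 1 + 1) (by omega), show j + 1 + 1 - 2 = j by omega,
            hεone j (by omega) (by omega),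
            ih (by omega) (by omega)] at hrk
          have hc := congrArg Units.val hrk
          simp only [Units.val_mul, Units.val_one, Units.val_neg, Units.val_pow_eq_pow_val] at hc
          refine Units.ext ?_
          simp only [Units.val_neg, Units.val_pow_eq_pow_val]
          refine cancel _ _ ((-(ξ : ℂ) ^ (j + 1)) * ξ)
            (mul_ne_zero (neg_ne_zero.mpr (pow_ne_zero _ hξ0)) hξ0) ?_
          linear_combination hc
    intro g
    by_cases hg : g = 0
    · rw [if_pos hg, hg, h0]
    · rw [if_neg hg]
      have hv : 1 ≤ g.val := by
        rcases Nat.eq_zero_or_pos g.val with h | h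
        · exact absurd (by rw [← hgcast g, h, Nat.cast_zero]) hg
        · exact h
      have := key g.val g.val_lt hv
      rwa [hgcast g] at this
  · intro ha
    have h0 : a 0 = 1 := by rw [ha 0, if_pos rfl]
    refine ⟨h0, ?_⟩
    intro g
    have hk : g.val < 2 * n := g.val_lt
    by_cases hk0 : g.val = 0
    · -- g = 0
      have hg : g = 0 := by rw [← hgcast g, hk0, Nat.cast_zero]
      subst hg
      have hm1 : (0 : ZMod (2 * n)) - 1 = ((2 * n - 1 : ℕ) : ZMod (2 * n)) := by
        rw [hneg1]; ring
      have hm2 : (0 : ZMod (2 * n)) - 2 = ((2 * n - 2 : ℕ) : ZMod (2 * n)) := by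
        rw [hneg2]; ring
      have hne : ((2 * n - 1 : ℕ) : ZMod (2 * n)) ≠ 0 := by
        intro h
        have := congrArg ZMod.val h
        rw [castval _ (by omega), ZMod.val_zero] at this
        omega
      rw [h0, hm1, hm2, ha, if_neg hne, castval (2 * n - 1) (by omega),
        hεone (2 * n - 2) (by omega) (by omega), ZMod.val_zero]
      refine Units.ext ?_
      simp only [Units.val_mul, Units.val_one, Units.val_neg, Units.val_pow_eq_pow_val, one_mul, mul_one,
        pow_zero, Nat.mul_zero]
      have e : ((ξ : ℂ)) ^ (2 * n - 1) * ξ = (ξ : ℂ) ^ (2 * n) := by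
        rw [← pow_succ, Nat.sub_add_cancel (by omega)]
      linear_combination -e - hξC
    · by_cases hk1 : g.val = 1
      · -- g = 1
        have hg : g = ((1 : ℕ) : ZMod (2 * n)) := by rw [← hgcast g, hk1]
        subst hg
        have hm1 : ((1 : ℕ) : ZMod (2 * n)) - 1 = 0 := by push_cast; ring
        have hm2 : ((1 : ℕ) : ZMod (2 * n)) - 2 = ((2 * n - 1 : ℕ) : ZMod (2 * n)) := by
          rw [hneg1]; push_cast; ring
        have hne : ((1 : ℕ) : ZMod (2 * n)) ≠ 0 := by
          intro h
          have := congrArg ZMod.val h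
          rw [castval _ (by omega), ZMod.val_zero] at this
          omega
        rw [hm1, hm2, hεneg, h0, ha, if_neg hne, castval 1 (by omega)]
        refine Units.ext ?_
        simp only [Units.val_mul, Units.val_one, Units.val_neg, Units.val_pow_eq_pow_val]
        ring
      · -- g.val ≥ 2
        obtain ⟨j, hj⟩ : ∃ j, g.val = j + 2 := ⟨g.val - 2, by omega⟩
        have hg : g = ((j + 2 : ℕ) : ZMod (2 * n)) := by rw [← hgcast g, hj]
        have hjlt : j + 2 < 2 * n := by omega
        have hne : ∀ m : ℕ, 1 ≤ m → m < 2 * n → ((m : ℕ) : ZMod (2 * n)) ≠ 0 := by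
          intro m h1 h2 h
          have := congrArg ZMod.val h
          rw [castval _ h2, ZMod.val_zero] at this
          omega
        rw [hg, subone (j + 2) (by omega), subtwo (j + 2) (by omega),
          Nat.add_sub_cancel, show j + 2 - 1 = j + 1 by omega,
          hεone j (by omega) (by omega),
          ha, if_neg (hne (j + 2) (by omega) hjlt),
          ha, if_neg (hne (j + 1) (by omega) (by omega)),
          castval (j + 2) hjlt, castval (j + 1) (by omega)]
        refine Units.ext ?_
        simp only [Units.val_mul, Units.val_one, Units.val_neg, Units.val_pow_eq_pow_val]
        ring
end

section
/- Let G be a finite abelian group, ε : G × G → {1,-1} a bicharacter, p ∈ G, z ∈ G with 2z = 0. Suppose (χ, μ, ξ, ν, a) satisfies: χ, μ characters of G; a : G → ℂˣ with a(0) = 1; ν² = μ(p+z); ξ² = χ(p); μ(g)² = χ(g)² for all g; μ(p) = χ(p+z); χ(g) = a(g)² for all g; a(h+2g) = a(h)·ε(g,h)·ε(g,h-p)·χ(g) for all g,h; a(g)·a(g-p)·ε(p+z, g-2p)·ξ = μ(g) for all g; and a(g)·a(-g) = ε(-g, g-p)·ε(-g, g) for all g. Let ζ : G → ℂˣ be a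 character and k ∈ G with 2k = 0. Define χ' = ζ²·χ, μ' = ζ²·μ, ξ' = ζ(p)·χ(k)·ξ, ν' = ζ(p+z)·μ(k)·ν, and a'(g) = ζ(g)·ε(k, g-p)·ε(k, p)·a(g). Then (χ', μ', ξ', ν', a') satisfies the same system of equations. -/
/-! Put `φ g = ζ g * ε k g`, a character. Since `ε k (g - p) * ε k p = ε k g`,
`ε k g ^ 2 = ε (k + k) g = 1`, `μ k ^ 2 = 1`, and `χ k = ε k p` by (n7) at `g = k`, `h = 0`,
the new data is the twist of the old one by `φ`: `a' = φ a`, `ξ' = φ(p) ξ`, `χ' = φ² χ`,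
`μ' = φ² μ` and `ν'² = φ(p + z)² ν²`. Twisting by any character preserves the equations:
in (n7) the factor `φ(h + 2g)` splits as `φ(h) φ(g)²`, in (n8) `φ(g) φ(g - p) φ(p) = φ(g)²`,
and in (n9) `φ(g) φ(-g) = 1`. -/

section Character

variable {G M : Type*} [AddGroup G]

theorem map_zero_of_map_add [Group M] {f : G → M} (hf : ∀ x y, f (x + y) = f x * f y) :
    f 0 = 1 := by
  simpa using hf 0 0

theorem sq_map_eq_one_of_add_self_eq_zero [Group M] {f : G → M}
    (hf : ∀ x y, f (x + y) = f x * f y) {k : G} (hk : k + k = 0) : f k ^ 2 = 1 := by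
  rw [sq, ← hf, hk, map_zero_of_map_add hf]

theorem map_add_mul_of_map_add [CommMonoid M] {f g : G → M}
    (hf : ∀ x y, f (x + y) = f x * f y) (hg : ∀ x y, g (x + y) = g x * g y) (x y : G) :
    f (x + y) * g (x + y) = f x * g x * (f y * g y) := by
  rw [hf, hg, mul_mul_mul_comm]

end Character

section ExtensionData

variable {G M : Type*} [AddGroup G] [CommGroup M]

/-- The fields `n1`, …, `n9` are the equations (n1)–(n9) of the paper; (n5) is absent. -/
structure IsExtensionData (ε : G → G → M) (p z : G) (χ μ : G → M) (ξ ν : M) (a : G → M) :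
    Prop where
  χ_add : ∀ x y, χ (x + y) = χ x * χ y
  μ_add : ∀ x y, μ (x + y) = μ x * μ y
  a_zero : a 0 = 1
  n1 : ν ^ 2 = μ (p + z)
  n2 : ξ ^ 2 = χ p
  n3 : ∀ g, μ g ^ 2 = χ g ^ 2
  n4 : μ p = χ (p + z)
  n6 : ∀ g, χ g = a g ^ 2
  n7 : ∀ g h, a (h + (g + g)) = a h * ε g h * ε g (h - p) * χ g
  n8 : ∀ g, a g * a (g - p) * ε (p + z) (g - p - p) * ξ = μ g
  n9 : ∀ g, a g * a (-g) = ε (-g) (g - p) * ε (-g) g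

namespace IsExtensionData

variable {ε : G → G → M} {p z : G} {χ μ : G → M} {ξ ν : M} {a : G → M}

theorem χ_eq_of_add_self_eq_zero (H : IsExtensionData ε p z χ μ ξ ν a) {k : G}
    (hεk : ∀ h h', ε k (h + h') = ε k h * ε k h') (hk : k + k = 0) : χ k = ε k p := by
  have hχk : ε k (-p) * χ k = 1 := by
    simpa [hk, H.a_zero, map_zero_of_map_add hεk] using (H.n7 k 0).symm
  have hεp : ε k (-p) * ε k p = 1 := by
    rw [← hεk, neg_add_cancel, map_zero_of_map_add hεk]
  rw [← inv_eq_of_mul_eq_one_right hχk, inv_eq_of_mul_eq_one_right hεp]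

theorem twist (H : IsExtensionData ε p z χ μ ξ ν a) (hz : z + z = 0) {φ : G → M}
    (hφ : ∀ x y, φ (x + y) = φ x * φ y) {ν' : M} (hν' : ν' ^ 2 = φ (p + z) ^ 2 * ν ^ 2) :
    IsExtensionData ε p z (fun g ↦ φ g ^ 2 * χ g) (fun g ↦ φ g ^ 2 * μ g) (φ p * ξ) ν'
      (fun g ↦ φ g * a g) where
  χ_add := map_add_mul_of_map_add (f := (φ · ^ 2)) (fun x y ↦ by rw [hφ, mul_pow]) H.χ_add
  μ_add := map_add_mul_of_map_add (f := (φ · ^ 2)) (fun x y ↦ by rw [hφ, mul_pow]) H.μ_add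
  a_zero := by rw [map_zero_of_map_add hφ, H.a_zero, one_mul]
  n1 := by rw [hν', H.n1]
  n2 := by rw [mul_pow, H.n2]
  n3 g := by rw [mul_pow, mul_pow, H.n3]
  n4 := by
    rw [H.n4, hφ, mul_pow, sq_map_eq_one_of_add_self_eq_zero hφ hz, mul_one]
  n6 g := by rw [mul_pow, H.n6]
  n7 g h := by
    simp only [hφ, H.n7, sq]
    ac_rfl
  n8 g := by
    have hφg : φ (g - p) * φ p = φ g := by rw [← hφ, sub_add_cancel]
    rw [← H.n8, sq, ← hφg]
    ac_rfl
  n9 g := by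
    rw [mul_mul_mul_comm, ← hφ, add_neg_cancel, map_zero_of_map_add hφ, one_mul, H.n9]

end IsExtensionData

end ExtensionData

theorem stmt_12_general {G : Type*} [AddCommGroup G]
    (ε : G → G → ℂˣ)
    (hεl : ∀ g g' h, ε (g + g') h = ε g h * ε g' h)
    (hεr : ∀ g h h', ε g (h + h') = ε g h * ε g h')
    (p z : G) (hz : z + z = 0)
    (χ μ : G → ℂˣ) (ξ ν : ℂˣ) (a : G → ℂˣ)
    (hχ : ∀ x y, χ (x + y) = χ x * χ y)
    (hμ : ∀ x y, μ (x + y) = μ x * μ y)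
    (ha0 : a 0 = 1)
    (hn1 : ν ^ 2 = μ (p + z))
    (hn2 : ξ ^ 2 = χ p)
    (hn3 : ∀ g, (μ g) ^ 2 = (χ g) ^ 2)
    (hn4 : μ p = χ (p + z))
    (hn6 : ∀ g, χ g = (a g) ^ 2)
    (hn7 : ∀ g h, a (h + (g + g)) = a h * ε g h * ε g (h - p) * χ g)
    (hn8 : ∀ g, a g * a (g - p) * ε (p + z) (g - p - p) * ξ = μ g)
    (hn9 : ∀ g, a g * a (-g) = ε (-g) (g - p) * ε (-g) g)
    (ζ : G → ℂˣ) (hζ : ∀ x y, ζ (x + y) = ζ x * ζ y)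
    (k : G) (hk : k + k = 0)
    (χ' μ' a' : G → ℂˣ) (ξ' ν' : ℂˣ)
    (hχ' : ∀ g, χ' g = ζ g ^ 2 * χ g)
    (hμ' : ∀ g, μ' g = ζ g ^ 2 * μ g)
    (hξ' : ξ' = ζ p * χ k * ξ)
    (hν' : ν' = ζ (p + z) * μ k * ν)
    (ha' : ∀ g, a' g = ζ g * ε k (g - p) * ε k p * a g) :
    (∀ x y, χ' (x + y) = χ' x * χ' y) ∧
    (∀ x y, μ' (x + y) = μ' x * μ' y) ∧
    a' 0 = 1 ∧
    ν' ^ 2 = μ' (p + z) ∧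
    ξ' ^ 2 = χ' p ∧
    (∀ g, (μ' g) ^ 2 = (χ' g) ^ 2) ∧
    μ' p = χ' (p + z) ∧
    (∀ g, χ' g = (a' g) ^ 2) ∧
    (∀ g h, a' (h + (g + g)) = a' h * ε g h * ε g (h - p) * χ' g) ∧
    (∀ g, a' g * a' (g - p) * ε (p + z) (g - p - p) * ξ' = μ' g) ∧
    (∀ g, a' g * a' (-g) = ε (-g) (g - p) * ε (-g) g) := by
  have H : IsExtensionData ε p z χ μ ξ ν a :=
    ⟨hχ, hμ, ha0, hn1, hn2, hn3, hn4, hn6, hn7, hn8, hn9⟩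
  set φ : G → ℂˣ := fun g ↦ ζ g * ε k g
  have hφ : ∀ x y, φ (x + y) = φ x * φ y := map_add_mul_of_map_add hζ (hεr k)
  have hεk_sq : ∀ g, ε k g ^ 2 = 1 := fun g ↦
    sq_map_eq_one_of_add_self_eq_zero (f := (ε · g)) (fun x y ↦ hεl x y g) hk
  have hφ_sq : ∀ g, φ g ^ 2 = ζ g ^ 2 := fun g ↦ by rw [mul_pow, hεk_sq, mul_one]
  obtain rfl : χ' = fun g ↦ φ g ^ 2 * χ g := funext fun g ↦ by rw [hχ', hφ_sq]
  obtain rfl : μ' = fun g ↦ φ g ^ 2 * μ g := funext fun g ↦ by rw [hμ', hφ_sq]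
  obtain rfl : a' = fun g ↦ φ g * a g := funext fun g ↦ by
    rw [ha', mul_assoc (ζ g), ← hεr, sub_add_cancel]
  obtain rfl : ξ' = φ p * ξ := by rw [hξ', H.χ_eq_of_add_self_eq_zero (hεr k) hk]
  have hν'_sq : ν' ^ 2 = φ (p + z) ^ 2 * ν ^ 2 := by
    rw [hν', hφ_sq, mul_pow, mul_pow, sq_map_eq_one_of_add_self_eq_zero hμ hk, mul_one]
  have H' := H.twist hz hφ hν'_sq
  exact ⟨H'.χ_add, H'.μ_add, H'.a_zero, H'.n1, H'.n2, H'.n3, H'.n4, H'.n6, H'.n7, H'.n8, H'.n9⟩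

/-- the transformation of extension data by a character `ζ` and a
2-torsion element `k` (Theorem 3.7) preserves the extension-data equations
(n1)–(n9) (excluding the one involving the structure constants `A`). -/
theorem stmt_12 {G : Type*} [AddCommGroup G] [Fintype G]
    (ε : G → G → ℂˣ)
    (hεval : ∀ g h, ε g h = 1 ∨ ε g h = -1)
    (hεl : ∀ g g' h, ε (g + g') h = ε g h * ε g' h)
    (hεr : ∀ g h h', ε g (h + h') = ε g h * ε g h')
    (p z : G) (hz : z + z = 0)
    (χ μ : G → ℂˣ) (ξ ν : ℂˣ) (a : G → ℂˣ)
    (hχ : ∀ x y, χ (x + y) = χ x * χ y)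
    (hμ : ∀ x y, μ (x + y) = μ x * μ y)
    (ha0 : a 0 = 1)
    (hn1 : ν ^ 2 = μ (p + z))
    (hn2 : ξ ^ 2 = χ p)
    (hn3 : ∀ g, (μ g) ^ 2 = (χ g) ^ 2)
    (hn4 : μ p = χ (p + z))
    (hn6 : ∀ g, χ g = (a g) ^ 2)
    (hn7 : ∀ g h, a (h + (g + g)) = a h * ε g h * ε g (h - p) * χ g)
    (hn8 : ∀ g, a g * a (g - p) * ε (p + z) (g - p - p) * ξ = μ g)
    (hn9 : ∀ g, a g * a (-g) = ε (-g) (g - p) * ε (-g) g)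
    (ζ : G → ℂˣ) (hζ : ∀ x y, ζ (x + y) = ζ x * ζ y)
    (k : G) (hk : k + k = 0)
    (χ' μ' a' : G → ℂˣ) (ξ' ν' : ℂˣ)
    (hχ' : ∀ g, χ' g = ζ g ^ 2 * χ g)
    (hμ' : ∀ g, μ' g = ζ g ^ 2 * μ g)
    (hξ' : ξ' = ζ p * χ k * ξ)
    (hν' : ν' = ζ (p + z) * μ k * ν)
    (ha' : ∀ g, a' g = ζ g * ε k (g - p) * ε k p * a g) :
    (∀ x y, χ' (x + y) = χ' x * χ' y) ∧
    (∀ x y, μ' (x + y) = μ' x * μ' y) ∧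
    a' 0 = 1 ∧
    ν' ^ 2 = μ' (p + z) ∧
    ξ' ^ 2 = χ' p ∧
    (∀ g, (μ' g) ^ 2 = (χ' g) ^ 2) ∧
    μ' p = χ' (p + z) ∧
    (∀ g, χ' g = (a' g) ^ 2) ∧
    (∀ g h, a' (h + (g + g)) = a' h * ε g h * ε g (h - p) * χ' g) ∧
    (∀ g, a' g * a' (g - p) * ε (p + z) (g - p - p) * ξ' = μ' g) ∧
    (∀ g, a' g * a' (-g) = ε (-g) (g - p) * ε (-g) g) :=
  stmt_12_general ε hεl hεr p z hz χ μ ξ ν a hχ hμ ha0 hn1 hn2 hn3 hn4 hn6 hn7 hn8 hn9 ζ hζ k hk χ'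
    μ' a' ξ' ν' hχ' hμ' hξ' hν' ha'
end
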